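/- arXiv:2403.01448 — 3 statements merged into one kernel-verified Lean document; each statement's English description precedes it below -/
import Mathlib

section
/- Suppose F : K → N is a bounded A-linear map between Hilbert C*-modules such that for every y ∈ N the functional F_y(x) = ⟨y, F(x)⟩ : K → A is adjointable. Then for every y ∈ N and every approximate unit (u_λ) of A, the net ((F_y)*(u_λ)) in K is a Cauchy net. -/
open scoped RightActions
open Filter

/-- The December 2024 Mathlib `CStarModule` (right `Aᵐᵒᵖ`-action), restated verbatim. -/
class CStarModuleOld (A : outParam <| Type*) (E : Type*) [NonUnitalSemiring A] [StarRing A]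
    [Module ℂ A] [AddCommGroup E] [Module ℂ E] [PartialOrder A] [SMul Aᵐᵒᵖ E] [Norm A] [Norm E]
    extends Inner A E where
  inner_add_right {x} {y} {z} : inner x (y + z) = inner x y + inner x z
  inner_self_nonneg {x} : 0 ≤ inner x x
  inner_self {x} : inner x x = 0 ↔ x = 0
  inner_op_smul_right {a : A} {x y : E} : inner x (y <• a) = inner x y * a
  inner_smul_right_complex {z : ℂ} {x} {y} : inner x (z • y) = z • inner x y
  star_inner x y : star (inner x y) = inner y x
  norm_eq_sqrt_norm_inner_self x : ‖x‖ = √‖inner x x‖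

/-- `S` is an adjoint of `T` with respect to the `A`-valued inner products:
`⟪T x, y⟫ = ⟪x, S y⟫` for all `x, y`. -/
def IsAdjointPair (A : Type*) {E F : Type*} [Inner A E] [Inner A F]
    (T : E → F) (S : F → E) : Prop :=
  ∀ (x : E) (y : F), (inner A (T x) y : A) = inner A x (S y)

/-- `T` is adjointable: it possesses an adjoint. -/
def HasAdjoint (A : Type*) {E F : Type*} [Inner A E] [Inner A F] (T : E → F) : Prop :=
  ∃ S : F → E, IsAdjointPair A T S

/-- `T` is `A`-linear: it commutes with the right `A`-action. -/
def IsALinear (A : Type*) {E F : Type*} [SMul Aᵐᵒᵖ E] [SMul Aᵐᵒᵖ F] (T : E → F) : Prop :=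
  ∀ (x : E) (a : A), T (x <• a) = T x <• a

/-- A bounded operator `T : M → N` of Hilbert C*-modules is *locally adjointable* if
`T ∘ γ` is adjointable for every adjointable (`A`-linear bounded) `γ : A → M`. -/
def LocallyAdjointable (A : Type*) [NonUnitalCStarAlgebra A] [PartialOrder A]
    [StarOrderedRing A] {M N : Type*}
    [NormedAddCommGroup M] [NormedSpace ℂ M] [SMul Aᵐᵒᵖ M] [CStarModuleOld A M]
    [Inner A N] (T : M → N) : Prop :=
  ∀ γ : A →L[ℂ] M, IsALinear A ⇑γ → HasAdjoint A ⇑γ → HasAdjoint A (T ∘ ⇑γ)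

variable {A : Type*} [NonUnitalCStarAlgebra A] [PartialOrder A] [StarOrderedRing A]
variable {K N : Type*}
  [NormedAddCommGroup K] [NormedSpace ℂ K] [SMul Aᵐᵒᵖ K] [CStarModuleOld A K]
  [NormedAddCommGroup N] [NormedSpace ℂ N] [SMul Aᵐᵒᵖ N] [CStarModuleOld A N]

/-!
Write `x_λ = (F_y)* u_λ`. As `F` is `A`-linear, `F_y (x b) = F_y x * b`, and adjointness of `F_y`
then forces `⟪y, F x⟫ (p q) = ⟪y, F x⟫ (q p)` for all `p, q`; in a C⋆-algebra this makes `⟪y, F x⟫`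
commute with every self-adjoint element. Hence
`⟪x_λ - x_μ, x_λ - x_μ⟫ = ⟪y u_λ - y u_μ, F (x_λ - x_μ)⟫`, and Cauchy–Schwarz gives
`‖x_λ - x_μ‖ ≤ ‖F‖ ‖y u_λ - y u_μ‖`. Since `y u_λ → y`, the net `(x_λ)` is Cauchy.
-/

open Topology

theorem commute_of_forall_mul_mul_comm {R : Type*} [NonUnitalNormedRing R] [StarRing R]
    [CStarRing R] {g a : R} (hg : ∀ p q : R, g * (p * q) = g * (q * p)) (ha : IsSelfAdjoint a) :
    Commute g a := by
  have hz : (g * a - a * g) * star (g * a - a * g) = 0 := calc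
    _ = (g * (a * (a * star g)) - g * (a * star g * a))
          - a * (g * (a * star g) - g * (star g * a)) := by
        simp only [star_sub, star_mul, ha.star_eq]; noncomm_ring
    _ = 0 := by rw [hg a (a * star g), hg a (star g)]; simp
  exact sub_eq_zero.mp ((CStarRing.mul_star_self_eq_zero_iff _).mp hz)

namespace CStarModuleOld

open MulOpposite

variable {E : Type*} [NormedAddCommGroup E] [NormedSpace ℂ E] [SMul Aᵐᵒᵖ E] [CStarModuleOld A E]

section

omit [StarOrderedRing A]

-- Mathlib's Hilbert C⋆-modules carry a left action: a right `A`-module is a left `Aᵐᵒᵖ`-module,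
-- with inner product `op ⟪x, y⟫`.
instance toCStarModuleMulOpposite : CStarModule Aᵐᵒᵖ E where
  inner x y := op (inner A x y)
  inner_add_right := congrArg op inner_add_right
  inner_self_nonneg := inner_self_nonneg (A := A)
  inner_self := op_eq_zero_iff _ |>.trans inner_self
  inner_op_smul_right := congrArg op inner_op_smul_right
  inner_smul_right_complex := congrArg op inner_smul_right_complex
  star_inner x y := congrArg op (star_inner x y)
  norm_eq_sqrt_norm_inner_self x := norm_eq_sqrt_norm_inner_self (A := A) x

lemma inner_sub_left {x y z : E} : inner A (x - y) z = inner A x z - inner A y z :=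
  op_injective (CStarModule.inner_sub_left (A := Aᵐᵒᵖ) (x := x) (y := y) (z := z))

lemma inner_sub_right {x y z : E} : inner A x (y - z) = inner A x y - inner A x z :=
  op_injective (CStarModule.inner_sub_right (A := Aᵐᵒᵖ) (x := x) (y := y) (z := z))

lemma inner_op_smul_left {a : A} {x y : E} : inner A (x <• a) y = star a * inner A x y :=
  op_injective (CStarModule.inner_op_smul_left (A := Aᵐᵒᵖ) (a := op a) (x := x) (y := y))

lemma norm_sq_eq {x : E} : ‖x‖ ^ 2 = ‖inner A x x‖ :=
  CStarModule.norm_sq_eq Aᵐᵒᵖ (x := x)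

lemma tendsto_op_smul_of_tendsto_mul {ι : Type*} {l : Filter ι} {u : ι → A}
    (hu_sa : ∀ i, IsSelfAdjoint (u i)) (hu_bdd : ∀ i, ‖u i‖ ≤ 1)
    (hu : ∀ a : A, Tendsto (fun i => a * u i) l (𝓝 a)) (y : E) :
    Tendsto (fun i => y <• u i) l (𝓝 y) := by
  set c := inner A y y
  have hbound : ∀ i, ‖y <• u i - y‖ ^ 2 ≤ 2 * ‖c * u i - c‖ := fun i => calc
    ‖y <• u i - y‖ ^ 2 = ‖u i * (c * u i - c) - (c * u i - c)‖ := by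
        rw [norm_sq_eq]
        simp only [inner_sub_left, inner_sub_right, inner_op_smul_left, inner_op_smul_right,
          (hu_sa i).star_eq, c]
        noncomm_ring
    _ ≤ ‖u i‖ * ‖c * u i - c‖ + ‖c * u i - c‖ := by grw [norm_sub_le, norm_mul_le]
    _ ≤ 2 * ‖c * u i - c‖ := by nlinarith [hu_bdd i, norm_nonneg (c * u i - c)]
  have hsq : Tendsto (fun i => ‖y <• u i - y‖ ^ 2) l (𝓝 0) :=
    squeeze_zero (fun _ => by positivity) hbound
      (by simpa using (((hu c).sub_const c).norm).const_mul 2)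
  exact tendsto_iff_norm_sub_tendsto_zero.2 (by simpa using hsq.sqrt)

end

lemma norm_inner_le {x y : E} : ‖inner A x y‖ ≤ ‖x‖ * ‖y‖ :=
  CStarModule.norm_inner_le (A := Aᵐᵒᵖ) E (x := x) (y := y)

end CStarModuleOld

namespace IsAdjointPair

open CStarModuleOld

variable {E : Type*} [NormedAddCommGroup E] [NormedSpace ℂ E] [SMul Aᵐᵒᵖ E] [CStarModuleOld A E]
  {φ : E → A} {ψ : A → E}

lemma inner_left_eq (h : IsAdjointPair A φ ψ) (a : A) (x : E) :
    inner A (ψ a) x = φ x * star a := by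
  rw [← star_inner, ← h x a, WithCStarModule.inner_def, star_mul, star_star]

lemma apply_mul_mul_comm (h : IsAdjointPair A φ ψ) (hφ : ∀ x b, φ (x <• b) = φ x * b) (x : E)
    (p q : A) :
    φ x * (p * q) = φ x * (q * p) := by
  have := congrArg star ((h (x <• p) (star q)).trans inner_op_smul_left)
  simp only [WithCStarModule.inner_def, hφ, ← h x (star q), star_mul, star_star] at this
  simpa only [mul_assoc] using this

lemma norm_sub_le {F : K →L[ℂ] N} {y : N} {ψ : A → K}
    (h : IsAdjointPair A (fun x => inner A y (F x)) ψ) (hF : IsALinear A ⇑F) {a b : A}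
    (ha : IsSelfAdjoint a) (hb : IsSelfAdjoint b) :
    ‖ψ a - ψ b‖ ≤ ‖F‖ * ‖y <• a - y <• b‖ := by
  set d := ψ a - ψ b
  set g := inner A y (F d)
  have hcomm : Commute g (a - b) := commute_of_forall_mul_mul_comm
    (h.apply_mul_mul_comm (fun x c => by simp only [hF x c, inner_op_smul_right]) d) (ha.sub hb)
  have hdd : inner A d d = inner A (y <• a - y <• b) (F d) := calc
    inner A d d = g * (a - b) := by
        rw [CStarModuleOld.inner_sub_left, h.inner_left_eq, h.inner_left_eq, ha.star_eq,
          hb.star_eq, mul_sub]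
    _ = (a - b) * g := hcomm.eq
    _ = _ := by
        rw [CStarModuleOld.inner_sub_left, inner_op_smul_left, inner_op_smul_left, ha.star_eq,
          hb.star_eq, sub_mul]
  have hsq : ‖d‖ ^ 2 ≤ ‖F‖ * ‖y <• a - y <• b‖ * ‖d‖ := calc
    ‖d‖ ^ 2 = ‖inner A (y <• a - y <• b) (F d)‖ := by rw [norm_sq_eq, hdd]
    _ ≤ ‖y <• a - y <• b‖ * ‖F d‖ := norm_inner_le
    _ ≤ ‖y <• a - y <• b‖ * (‖F‖ * ‖d‖) := by gcongr; exact F.le_opNorm d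
    _ = ‖F‖ * ‖y <• a - y <• b‖ * ‖d‖ := by ring
  rcases (norm_nonneg d).eq_or_lt with hd | hd
  · rw [← hd]; positivity
  · exact le_of_mul_le_mul_right (by rwa [sq] at hsq) hd

end IsAdjointPair

/-- If every functional `F_y : x ↦ ⟪y, F x⟫` is adjointable (with adjoint `G y`),
then for every `y` and every approximate unit `(u_λ)` of `A`, the net `((F_y)* (u_λ))`
is a Cauchy net in `K`. -/
theorem adjoint_of_functional_on_approxUnit_cauchy
    {Λ : Type*} [Nonempty Λ] [SemilatticeSup Λ] (u : Λ → A)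
    (hu_pos : ∀ i, 0 ≤ u i) (hu_bdd : ∀ i, ‖u i‖ ≤ 1)
    (hu_approx : ∀ a : A, Tendsto (fun i => u i * a) atTop (nhds a) ∧
      Tendsto (fun i => a * u i) atTop (nhds a))
    (F : K →L[ℂ] N) (hF : IsALinear A ⇑F) (G : N → A → K)
    (hG : ∀ y : N, IsAdjointPair A (fun x : K => (inner A y (F x) : A)) (G y)) :
    ∀ y : N, CauchySeq (fun i => G y (u i)) := by
  intro y
  have hu_sa : ∀ i, IsSelfAdjoint (u i) := fun i => IsSelfAdjoint.of_nonneg (hu_pos i)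
  have hyu : CauchySeq (fun i => y <• u i) :=
    (CStarModuleOld.tendsto_op_smul_of_tendsto_mul hu_sa hu_bdd (fun a => (hu_approx a).2)
      y).cauchySeq
  rw [cauchySeq_iff_tendsto_dist_atTop_0] at hyu ⊢
  refine squeeze_zero (fun _ => dist_nonneg) (fun p => ?_) (by simpa using hyu.const_mul ‖F‖)
  simpa only [dist_eq_norm] using (hG y).norm_sub_le hF (hu_sa p.1) (hu_sa p.2)
end

section
/- A bounded A-linear map F : M → ℓ²(A) is locally adjointable if and only if each coordinate map π_k ∘ F : M → A, k ∈ ℕ, is locally adjointable. -/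
/-!
An adjoint `S` of `F ∘ γ` yields adjoints `b ↦ S (Pi.single k b)` of the coordinates. Conversely,
given adjoints `S k` of the coordinates of `G = F ∘ γ`, the adjoint of `G` is `y ↦ ∑ₖ S k (y k)`.
This series converges because every partial sum `c = ∑_{k ∈ t} S k (y k)` satisfies
`‖c‖² = ‖c⋆ c‖ = ‖∑_{k ∈ t} (G c k)⋆ y k‖ ≤ K ‖c‖ ‖y|_t‖` by Cauchy–Schwarz and the boundedness
of `F` and `γ`, so `‖c‖ ≤ K ‖y|_t‖`: the tails of `∑ S k (y k)` are controlled by those of `y`.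
-/


open scoped RightActions
open Filter

/-- The series `∑ f i` is norm-convergent (its partial sums converge). -/
def SeriesConv {A : Type*} [NonUnitalCStarAlgebra A] (f : ℕ → A) : Prop :=
  ∃ l : A, Tendsto (fun n => ∑ i ∈ Finset.range n, f i) atTop (nhds l)

/-- `x : ℕ → A` is an element of the standard Hilbert module `ℓ²(A)`:
the series `∑ xᵢ* xᵢ` is norm-convergent. -/
def MemL2 {A : Type*} [NonUnitalCStarAlgebra A] (x : ℕ → A) : Prop :=
  SeriesConv fun i => star (x i) * x i

/-- The (December 2024) Mathlib notion of a Hilbert C⋆-module with a right `A`-action. -/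
class RightCStarModule (A E : Type*) [NonUnitalSemiring A] [StarRing A]
    [Module ℂ A] [AddCommGroup E] [Module ℂ E] [PartialOrder A] [SMul Aᵐᵒᵖ E] [Norm A] [Norm E]
    extends Inner A E where
  inner_add_right {x} {y} {z} : inner x (y + z) = inner x y + inner x z
  inner_self_nonneg {x} : 0 ≤ inner x x
  inner_self {x} : inner x x = 0 ↔ x = 0
  inner_op_smul_right {a : A} {x y : E} : inner x (y <• a) = inner x y * a
  inner_smul_right_complex {z : ℂ} {x} {y} : inner x (z • y) = z • inner x y
  star_inner x y : star (inner x y) = inner y x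
  norm_eq_sqrt_norm_inner_self x : ‖x‖ = √‖inner x x‖

/-- A C⋆-algebra as a Hilbert C⋆-module over itself, with `⟪x, y⟫ = star x * y`. -/
instance {A : Type*} [NonUnitalCStarAlgebra A] [PartialOrder A] [StarOrderedRing A] :
    RightCStarModule A A where
  inner x y := star x * y
  inner_add_right := mul_add ..
  inner_self_nonneg := star_mul_self_nonneg _
  inner_self := CStarRing.star_mul_self_eq_zero_iff _
  inner_op_smul_right := (mul_assoc ..).symm
  inner_smul_right_complex := mul_smul_comm ..
  star_inner x y := by simp
  norm_eq_sqrt_norm_inner_self x := by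
    rw [CStarRing.norm_star_mul_self, Real.sqrt_mul_self (norm_nonneg _)]

variable {A : Type*} [NonUnitalCStarAlgebra A] [PartialOrder A] [StarOrderedRing A]
variable {M : Type*} [NormedAddCommGroup M] [NormedSpace ℂ M] [SMul Aᵐᵒᵖ M] [RightCStarModule A M]

lemma norm_sum_star_mul_le {ι : Type*} (s : Finset ι) (x y : ι → A) :
    ‖∑ i ∈ s, star (x i) * y i‖ ≤
      √‖∑ i ∈ s, star (x i) * x i‖ * √‖∑ i ∈ s, star (y i) * y i‖ := by
  let u : WithCStarModule A (s → A) := (WithCStarModule.equiv A _).symm fun i => star (x i)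
  let v : WithCStarModule A (s → A) := (WithCStarModule.equiv A _).symm fun i => star (y i)
  have h := CStarModule.norm_inner_le (A := A) (WithCStarModule A (s → A)) (x := v) (y := u)
  simp only [WithCStarModule.pi_inner, WithCStarModule.pi_norm, WithCStarModule.inner_def, u, v,
    WithCStarModule.equiv_symm_pi_apply, star_star] at h
  rw [Finset.sum_coe_sort s fun i => star (x i) * y i,
    Finset.sum_coe_sort s fun i => star (x i) * x i,
    Finset.sum_coe_sort s fun i => star (y i) * y i] at h
  exact h.trans_eq (mul_comm _ _)

lemma summable_of_nonneg_of_cauchySeq {f : ℕ → A} (hf : ∀ i, 0 ≤ f i)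
    (h : CauchySeq fun n => ∑ i ∈ Finset.range n, f i) : Summable f := by
  refine summable_iff_vanishing_norm.2 fun ε hε => ?_
  obtain ⟨N, hN⟩ := Metric.cauchySeq_iff'.1 h ε hε
  refine ⟨Finset.range N, fun t ht => ?_⟩
  set n := N + t.sup id + 1
  have ht_sub : t ⊆ Finset.range n \ Finset.range N := fun i hi => by
    have : i ≤ t.sup id := Finset.le_sup (f := id) hi
    simp only [Finset.mem_sdiff, Finset.mem_range]
    exact ⟨by omega, by simpa using Finset.disjoint_left.1 ht hi⟩
  calc ‖∑ i ∈ t, f i‖ ≤ ‖∑ i ∈ Finset.range n \ Finset.range N, f i‖ :=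
        CStarAlgebra.norm_le_norm_of_nonneg_of_le (Finset.sum_nonneg fun i _ => hf i)
          (Finset.sum_le_sum_of_subset_of_nonneg ht_sub fun i _ _ => hf i)
    _ < ε := by
      rw [Finset.sum_sdiff_eq_sub (Finset.range_subset_range.2 (by omega)), ← dist_eq_norm]
      exact hN n (by omega)

lemma MemL2.summable {y : ℕ → A} (hy : MemL2 y) : Summable fun i => star (y i) * y i :=
  let ⟨_, hl⟩ := hy
  summable_of_nonneg_of_cauchySeq (fun _ => star_mul_self_nonneg _) hl.cauchySeq

lemma MemL2.norm_sum_le_norm_tsum {y : ℕ → A} (hy : MemL2 y) (t : Finset ℕ) :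
    ‖∑ i ∈ t, star (y i) * y i‖ ≤ ‖∑' i, star (y i) * y i‖ :=
  CStarAlgebra.norm_le_norm_of_nonneg_of_le (Finset.sum_nonneg fun _ _ => star_mul_self_nonneg _)
    (hy.summable.sum_le_tsum t fun _ _ => star_mul_self_nonneg _)

lemma memL2_single {B : Type*} [NonUnitalCStarAlgebra B] (k : ℕ) (b : B) :
    MemL2 (Pi.single k b) :=
  ⟨_, (hasSum_single k fun i hi => by simp [Pi.single_eq_of_ne hi]).tendsto_sum_nat⟩

lemma summable_of_norm_sum_le_mul_sqrt {ι E F : Type*} [NormedAddCommGroup E] [CompleteSpace E]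
    [NormedAddCommGroup F] [CompleteSpace F] {f : ι → E} {g : ι → F} {K : ℝ} (hK : 0 ≤ K)
    (hf : Summable f) (h : ∀ t : Finset ι, ‖∑ i ∈ t, g i‖ ≤ K * √‖∑ i ∈ t, f i‖) :
    Summable g := by
  refine summable_iff_vanishing_norm.2 fun ε hε => ?_
  have hδ : 0 < ε / (K + 1) := by positivity
  obtain ⟨s, hs⟩ := summable_iff_vanishing_norm.1 hf _ (pow_pos hδ 2)
  refine ⟨s, fun t ht => ?_⟩
  calc ‖∑ i ∈ t, g i‖ ≤ K * √‖∑ i ∈ t, f i‖ := h t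
    _ ≤ K * (ε / (K + 1)) := by gcongr; exact ((Real.sqrt_lt' hδ).2 (hs t ht)).le
    _ < ε := by rw [mul_div_assoc', div_lt_iff₀ (by positivity)]; nlinarith

lemma inner_eq_star_mul (a b : A) : inner A a b = star a * b := rfl

lemma norm_sum_le_of_isAdjointPair {ι : Type*} {G : A → ι → A} {S : ι → A → A} {K : ℝ}
    (hK : 0 ≤ K) (hG : ∀ a t, √‖∑ i ∈ t, star (G a i) * G a i‖ ≤ K * ‖a‖)
    (hS : ∀ i, IsAdjointPair A (fun a => G a i) (S i)) (y : ι → A) (t : Finset ι) :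
    ‖∑ i ∈ t, S i (y i)‖ ≤ K * √‖∑ i ∈ t, star (y i) * y i‖ := by
  set c := ∑ i ∈ t, S i (y i)
  have hc : star c * c = ∑ i ∈ t, star (G c i) * y i := by
    rw [Finset.mul_sum]
    exact Finset.sum_congr rfl fun i _ => (hS i c (y i)).symm
  have hsq : ‖c‖ * ‖c‖ ≤ ‖c‖ * (K * √‖∑ i ∈ t, star (y i) * y i‖) :=
    calc ‖c‖ * ‖c‖ = ‖∑ i ∈ t, star (G c i) * y i‖ := by rw [← hc, CStarRing.norm_star_mul_self]
      _ ≤ √‖∑ i ∈ t, star (G c i) * G c i‖ * √‖∑ i ∈ t, star (y i) * y i‖ :=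
        norm_sum_star_mul_le t _ _
      _ ≤ K * ‖c‖ * √‖∑ i ∈ t, star (y i) * y i‖ := by gcongr; exact hG c t
      _ = ‖c‖ * (K * √‖∑ i ∈ t, star (y i) * y i‖) := by ring
  rcases (norm_nonneg c).eq_or_lt with hc0 | hc0
  · rw [← hc0]; positivity
  · exact le_of_mul_le_mul_left hsq hc0

lemma tsum_eq_inner_tsum_of_isAdjointPair {G : A → ℕ → A} {S : ℕ → A → A} {K : ℝ} (hK : 0 ≤ K)
    (hG : ∀ a t, √‖∑ i ∈ t, star (G a i) * G a i‖ ≤ K * ‖a‖)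
    (hS : ∀ i, IsAdjointPair A (fun a => G a i) (S i)) (a : A) {y : ℕ → A} (hy : MemL2 y) :
    ∑' i, star (G a i) * y i = inner A a (∑' i, S i (y i)) := by
  have hsum : Summable fun i => S i (y i) :=
    summable_of_norm_sum_le_mul_sqrt hK hy.summable (norm_sum_le_of_isAdjointPair hK hG hS y)
  calc ∑' i, star (G a i) * y i = ∑' i, star a * S i (y i) := tsum_congr fun i => hS i a (y i)
    _ = star a * ∑' i, S i (y i) := hsum.tsum_mul_left _

lemma hasAdjoint_coord_of_tsum_eq_inner {G : A → ℕ → A} {T : (ℕ → A) → A}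
    (hT : ∀ a y, MemL2 y → ∑' i, star (G a i) * y i = inner A a (T y)) (k : ℕ) :
    HasAdjoint A fun a => G a k := by
  refine ⟨fun b => T (Pi.single k b), fun a b => ?_⟩
  rw [← hT a _ (memL2_single k b), tsum_eq_single k fun i hi => by simp [Pi.single_eq_of_ne hi]]
  simp [inner_eq_star_mul]

theorem locallyAdjointable_iff_coordinates_general (F : M → ℕ → A)
    (hmem : ∀ x, MemL2 (F x))
    (hbdd : ∃ C : ℝ, ∀ x : M, Real.sqrt ‖∑' i, star (F x i) * F x i‖ ≤ C * ‖x‖) :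
    -- `F` is locally adjointable (i.e. `F ∘ γ : A → ℓ²(A)` is adjointable for each
    -- adjointable `γ : A → M`) ...
    (∀ γ : A →L[ℂ] M, IsALinear A ⇑γ → HasAdjoint A ⇑γ →
      ∃ S : (ℕ → A) → A, ∀ (a : A) (y : ℕ → A), MemL2 y →
        (∑' i, star (F (γ a) i) * y i) = (inner A a (S y) : A))
    -- ... iff every coordinate `π_k ∘ F` is locally adjointable
    ↔ ∀ k : ℕ, ∀ γ : A →L[ℂ] M, IsALinear A ⇑γ → HasAdjoint A ⇑γ →
        HasAdjoint A (fun a : A => F (γ a) k) := by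
  obtain ⟨C, hC⟩ := hbdd
  have hFγ : ∀ (γ : A →L[ℂ] M) a t,
      √‖∑ i ∈ t, star (F (γ a) i) * F (γ a) i‖ ≤ max C 0 * ‖γ‖ * ‖a‖ := fun γ a t =>
    calc √‖∑ i ∈ t, star (F (γ a) i) * F (γ a) i‖
        ≤ √‖∑' i, star (F (γ a) i) * F (γ a) i‖ :=
          Real.sqrt_le_sqrt ((hmem (γ a)).norm_sum_le_norm_tsum t)
      _ ≤ C * ‖γ a‖ := hC (γ a)
      _ ≤ max C 0 * ‖γ a‖ := by gcongr; exact le_max_left C 0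
      _ ≤ max C 0 * ‖γ‖ * ‖a‖ := by rw [mul_assoc]; gcongr; exact γ.le_opNorm a
  refine ⟨fun h k γ hlin hadj => ?_, fun h γ hlin hadj => ?_⟩
  · obtain ⟨T, hT⟩ := h γ hlin hadj
    exact hasAdjoint_coord_of_tsum_eq_inner hT k
  · choose S hS using fun k => h k γ hlin hadj
    exact ⟨fun y => ∑' i, S i (y i), fun a y hy =>
      tsum_eq_inner_tsum_of_isAdjointPair (by positivity) (hFγ γ) hS a hy⟩

/-- A bounded `A`-linear map `F : M → ℓ²(A)` is locally adjointable iff every coordinate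
`π_k ∘ F : M → A` is locally adjointable. -/
theorem locallyAdjointable_iff_coordinates (F : M → ℕ → A)
    (hmem : ∀ x, MemL2 (F x))
    (hadd : ∀ x y : M, F (x + y) = F x + F y)
    (hsmul : ∀ (c : ℂ) (x : M), F (c • x) = c • F x)
    (hAlin : ∀ (x : M) (a : A), F (x <• a) = fun i => F x i * a)
    (hbdd : ∃ C : ℝ, ∀ x : M, Real.sqrt ‖∑' i, star (F x i) * F x i‖ ≤ C * ‖x‖) :
    -- `F` is locally adjointable (i.e. `F ∘ γ : A → ℓ²(A)` is adjointable for each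
    -- adjointable `γ : A → M`) ...
    (∀ γ : A →L[ℂ] M, IsALinear A ⇑γ → HasAdjoint A ⇑γ →
      ∃ S : (ℕ → A) → A, ∀ (a : A) (y : ℕ → A), MemL2 y →
        (∑' i, star (F (γ a) i) * y i) = (inner A a (S y) : A))
    -- ... iff every coordinate `π_k ∘ F` is locally adjointable
    ↔ ∀ k : ℕ, ∀ γ : A →L[ℂ] M, IsALinear A ⇑γ → HasAdjoint A ⇑γ →
        HasAdjoint A (fun a : A => F (γ a) k) :=
  locallyAdjointable_iff_coordinates_general F hmem hbdd
end

section
/- Let A be a unital C*-algebra. A bounded A-linear functional Γ : ℓ²(A) → A is adjointable if and only if the sequence Γ_i = Γ(e_i)* (where e_i is the i-th standard basis element) satisfies: the series ∑_i Γ_i* Γ_i converges in norm in A. Moreover, in that case Γ(x) = ∑_i Γ_i* x_i and the adjoint is Γ*(a) = (Γ_1 a, Γ_2 a, …). -/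
/-!
On vectors supported in a finite set `s`, additivity and `A`-linearity give
`Γ x = ∑ i ∈ s, Γ eᵢ * xᵢ`. On the complementary tail, boundedness controls `Γ` by
`√‖∑ i ∉ s, xᵢ* xᵢ‖`, which tends to `0` as `s` grows, so `Γ x = ∑ Γ eᵢ * xᵢ` holds
unconditionally. Taking adjoints gives `(Γ x)* a = ∑ xᵢ* (Γ eᵢ* a)`. Testing an adjoint `S`
against `eⱼ` forces `S a j = Γ eⱼ* a`. So an adjoint exists iff `(Γ eᵢ*)ᵢ = S 1` lies in `ℓ²(A)`,
which is the convergence of `∑ Γ eᵢ Γ eᵢ*`; then `S a = S 1 * a` lies there too.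
-/

open scoped RightActions
open Filter

open Topology

section L2

variable {A : Type*} [NonUnitalCStarAlgebra A]

theorem SeriesConv.of_summable {f : ℕ → A} (hf : Summable f) : SeriesConv f :=
  ⟨_, hf.hasSum.tendsto_sum_nat⟩

theorem SeriesConv.star_mul_mul {f : ℕ → A} (hf : SeriesConv f) (a : A) :
    SeriesConv fun i => star a * f i * a := by
  obtain ⟨l, hl⟩ := hf
  refine ⟨star a * l * a, ((hl.const_mul (star a)).mul_const a).congr fun n => ?_⟩
  rw [Finset.mul_sum, Finset.sum_mul]

theorem star_mul_eq_tsum_of_hasSum {g x : ℕ → A} {y : A} (h : HasSum (fun i => g i * x i) y)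
    (a : A) : star y * a = ∑' i, star (x i) * (star (g i) * a) := by
  refine ((h.star.mul_right a).congr_fun fun i => ?_).tsum_eq.symm
  rw [star_mul, mul_assoc]

theorem star_mul_self_indicator (s : Set ℕ) (x : ℕ → A) :
    (fun i => star (s.indicator x i) * s.indicator x i) =
      s.indicator fun i => star (x i) * x i := by
  funext i
  by_cases hi : i ∈ s <;> simp [hi]

theorem memL2_zero : MemL2 (0 : ℕ → A) :=
  SeriesConv.of_summable <| by simp

theorem memL2_single_s16 (i : ℕ) (c : A) : MemL2 (Pi.single i c) :=
  SeriesConv.of_summable <| summable_of_ne_finset_zero (s := {i}) fun j hj => by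
    rw [Pi.single_eq_of_ne (Finset.notMem_singleton.mp hj), mul_zero]

variable [PartialOrder A] [StarOrderedRing A]

theorem SeriesConv.summable_of_nonneg {f : ℕ → A} (hf : SeriesConv f) (hf₀ : ∀ i, 0 ≤ f i) :
    Summable f := by
  obtain ⟨l, hl⟩ := hf
  refine summable_iff_vanishing_norm.mpr fun ε hε => ?_
  obtain ⟨N, hN⟩ := Metric.cauchySeq_iff'.mp hl.cauchySeq ε hε
  refine ⟨Finset.range N, fun t ht => ?_⟩
  obtain ⟨m, htm⟩ := t.exists_nat_subset_range
  have hsub : t ⊆ Finset.Ico N (max m N) := fun i hi => Finset.mem_Ico.mpr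
    ⟨not_lt.mp fun h => Finset.disjoint_left.mp ht hi (Finset.mem_range.mpr h),
      (Finset.mem_range.mp (htm hi)).trans_le (le_max_left m N)⟩
  have hle : ∑ i ∈ t, f i ≤ ∑ i ∈ Finset.Ico N (max m N), f i :=
    Finset.sum_le_sum_of_subset_of_nonneg hsub fun i _ _ => hf₀ i
  calc ‖∑ i ∈ t, f i‖ ≤ ‖∑ i ∈ Finset.Ico N (max m N), f i‖ :=
        CStarAlgebra.norm_le_norm_of_nonneg_of_le (Finset.sum_nonneg fun i _ => hf₀ i) hle
    _ < ε := by
        rw [Finset.sum_Ico_eq_sub _ (le_max_right m N), ← dist_eq_norm]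
        exact hN _ (le_max_right m N)

theorem memL2_iff_summable {x : ℕ → A} : MemL2 x ↔ Summable fun i => star (x i) * x i :=
  ⟨fun hx => hx.summable_of_nonneg fun i => star_mul_self_nonneg (x i), SeriesConv.of_summable⟩

theorem MemL2.indicator {x : ℕ → A} (hx : MemL2 x) (s : Set ℕ) : MemL2 (s.indicator x) := by
  rw [memL2_iff_summable, star_mul_self_indicator]
  exact (memL2_iff_summable.mp hx).indicator s

end L2

section Functional

variable {A : Type*} [CStarAlgebra A] {Γ : (ℕ → A) → A}

theorem apply_zero_of_map_add
    (hadd : ∀ x y : ℕ → A, MemL2 x → MemL2 y → Γ (x + y) = Γ x + Γ y) : Γ 0 = 0 := by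
  have h := hadd 0 0 memL2_zero memL2_zero
  rw [add_zero] at h
  exact left_eq_add.mp h

theorem apply_single_eq_mul
    (hAlin : ∀ (x : ℕ → A) (a : A), MemL2 x → Γ (fun i => x i * a) = Γ x * a) (i : ℕ) (c : A) :
    Γ (Pi.single i c) = Γ (Pi.single i 1) * c := by
  rw [← hAlin _ c (memL2_single_s16 i 1)]
  congr 1
  funext j
  simpa only [one_mul] using Pi.single_mul_left_apply i j (1 : A) fun _ => c

theorem adjoint_apply_eq {S : A → ℕ → A}
    (hS : ∀ (x : ℕ → A) (a : A), MemL2 x → star (Γ x) * a = ∑' i, star (x i) * S a i)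
    (a : A) (j : ℕ) : S a j = star (Γ (Pi.single j 1)) * a := by
  rw [hS _ a (memL2_single_s16 j 1), tsum_eq_single j fun i hij => by simp [hij]]
  simp

variable [PartialOrder A] [StarOrderedRing A]

theorem apply_indicator_finset
    (hadd : ∀ x y : ℕ → A, MemL2 x → MemL2 y → Γ (x + y) = Γ x + Γ y)
    (hAlin : ∀ (x : ℕ → A) (a : A), MemL2 x → Γ (fun i => x i * a) = Γ x * a)
    {x : ℕ → A} (hx : MemL2 x) (s : Finset ℕ) :
    Γ ((s : Set ℕ).indicator x) = ∑ i ∈ s, Γ (Pi.single i 1) * x i := by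
  classical
  induction s using Finset.induction_on with
  | empty =>
    rw [Finset.coe_empty, Set.indicator_empty', Finset.sum_empty, apply_zero_of_map_add hadd]
  | insert i s hi ih =>
    have hsplit : ((insert i s : Finset ℕ) : Set ℕ).indicator x
        = Pi.single i (x i) + (s : Set ℕ).indicator x := by
      funext j
      by_cases hj : j = i
      · subst hj; simp [hi]
      · simp [hj, Set.indicator_apply]
    rw [hsplit, hadd _ _ (memL2_single_s16 i _) (hx.indicator _), Finset.sum_insert hi, ih,
      apply_single_eq_mul hAlin]

theorem hasSum_apply_single_mul
    (hadd : ∀ x y : ℕ → A, MemL2 x → MemL2 y → Γ (x + y) = Γ x + Γ y)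
    (hAlin : ∀ (x : ℕ → A) (a : A), MemL2 x → Γ (fun i => x i * a) = Γ x * a)
    (hbdd : ∃ C : ℝ, ∀ x : ℕ → A, MemL2 x → ‖Γ x‖ ≤ C * Real.sqrt ‖∑' i, star (x i) * x i‖)
    {x : ℕ → A} (hx : MemL2 x) :
    HasSum (fun i => Γ (Pi.single i 1) * x i) (Γ x) := by
  obtain ⟨C, hC⟩ := hbdd
  have htail : ∀ s : Finset ℕ,
      Γ x - ∑ i ∈ s, Γ (Pi.single i 1) * x i = Γ ((s : Set ℕ)ᶜ.indicator x) := fun s => by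
    rw [← apply_indicator_finset hadd hAlin hx, sub_eq_iff_eq_add', ← hadd _ _
      (hx.indicator _) (hx.indicator _), Set.indicator_self_add_compl]
  have htail_le : ∀ s : Finset ℕ,
      ‖Γ ((s : Set ℕ)ᶜ.indicator x)‖ ≤ C * √‖∑' i : {i // i ∉ s}, star (x i) * x i‖ :=
    fun s => by
      have h := hC _ (hx.indicator (s : Set ℕ)ᶜ)
      rwa [star_mul_self_indicator, ← tsum_subtype] at h
  show Tendsto (fun s : Finset ℕ => ∑ i ∈ s, Γ (Pi.single i 1) * x i) atTop (𝓝 (Γ x))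
  rw [tendsto_iff_norm_sub_tendsto_zero]
  refine squeeze_zero (fun _ => norm_nonneg _) (fun s => ?_)
    (by simpa using (tendsto_tsum_compl_atTop_zero fun i => star (x i) * x i).norm.sqrt.const_mul C)
  rw [norm_sub_rev, htail]
  exact htail_le s

end Functional

variable {A : Type*} [CStarAlgebra A] [PartialOrder A] [StarOrderedRing A]

theorem functional_adjointable_iff_general (Γ : (ℕ → A) → A)
    (hadd : ∀ x y : ℕ → A, MemL2 x → MemL2 y → Γ (x + y) = Γ x + Γ y)
    (hAlin : ∀ (x : ℕ → A) (a : A), MemL2 x → Γ (fun i => x i * a) = Γ x * a)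
    (hbdd : ∃ C : ℝ, ∀ x : ℕ → A, MemL2 x →
      ‖Γ x‖ ≤ C * Real.sqrt ‖∑' i, star (x i) * x i‖) :
    -- adjointability iff norm convergence of `∑ Γᵢ* Γᵢ`
    ((∃ S : A → (ℕ → A), (∀ a, MemL2 (S a)) ∧
        ∀ (x : ℕ → A) (a : A), MemL2 x →
          star (Γ x) * a = ∑' i, star (x i) * S a i)
      ↔ SeriesConv fun i => Γ (Pi.single i 1) * star (Γ (Pi.single i 1))) ∧
    -- in the adjointable case: the explicit formulas for `Γ` and for its adjoint
    ((∃ S : A → (ℕ → A), (∀ a, MemL2 (S a)) ∧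
        ∀ (x : ℕ → A) (a : A), MemL2 x →
          star (Γ x) * a = ∑' i, star (x i) * S a i) →
      (∀ x : ℕ → A, MemL2 x → Γ x = ∑' i, Γ (Pi.single i 1) * x i) ∧
      (∀ (x : ℕ → A) (a : A), MemL2 x →
        star (Γ x) * a = ∑' i, star (x i) * (star (Γ (Pi.single i 1)) * a))) := by
  have hΓ : ∀ x, MemL2 x → HasSum (fun i => Γ (Pi.single i 1) * x i) (Γ x) :=
    fun x hx => hasSum_apply_single_mul hadd hAlin hbdd hx
  have hadj : ∀ (x : ℕ → A) (a : A), MemL2 x →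
      star (Γ x) * a = ∑' i, star (x i) * (star (Γ (Pi.single i 1)) * a) :=
    fun x a hx => star_mul_eq_tsum_of_hasSum (hΓ x hx) a
  refine ⟨⟨fun ⟨S, hS_mem, hS⟩ => ?_, fun hconv => ⟨_, fun a => ?_, hadj⟩⟩,
    fun _ => ⟨fun x hx => (hΓ x hx).tsum_eq.symm, hadj⟩⟩
  · simpa [MemL2, adjoint_apply_eq hS] using hS_mem 1
  · simpa [MemL2, mul_assoc] using hconv.star_mul_mul a

/-- For a unital C*-algebra `A`, a bounded `A`-linear functional `Γ : ℓ²(A) → A` is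
adjointable iff, with `Γᵢ := Γ(eᵢ)*` (`eᵢ` the standard basis elements), the series
`∑ Γᵢ* Γᵢ = ∑ Γ(eᵢ) Γ(eᵢ)*` converges in norm. Moreover, in that case
`Γ(x) = ∑ Γᵢ* xᵢ` and the adjoint is `Γ*(a) = (Γ₁ a, Γ₂ a, …)`. -/
theorem functional_adjointable_iff (Γ : (ℕ → A) → A)
    (hadd : ∀ x y : ℕ → A, MemL2 x → MemL2 y → Γ (x + y) = Γ x + Γ y)
    (hsmul : ∀ (c : ℂ) (x : ℕ → A), MemL2 x → Γ (c • x) = c • Γ x)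
    (hAlin : ∀ (x : ℕ → A) (a : A), MemL2 x → Γ (fun i => x i * a) = Γ x * a)
    (hbdd : ∃ C : ℝ, ∀ x : ℕ → A, MemL2 x →
      ‖Γ x‖ ≤ C * Real.sqrt ‖∑' i, star (x i) * x i‖) :
    -- adjointability iff norm convergence of `∑ Γᵢ* Γᵢ`
    ((∃ S : A → (ℕ → A), (∀ a, MemL2 (S a)) ∧
        ∀ (x : ℕ → A) (a : A), MemL2 x →
          star (Γ x) * a = ∑' i, star (x i) * S a i)
      ↔ SeriesConv fun i => Γ (Pi.single i 1) * star (Γ (Pi.single i 1))) ∧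
    -- in the adjointable case: the explicit formulas for `Γ` and for its adjoint
    ((∃ S : A → (ℕ → A), (∀ a, MemL2 (S a)) ∧
        ∀ (x : ℕ → A) (a : A), MemL2 x →
          star (Γ x) * a = ∑' i, star (x i) * S a i) →
      (∀ x : ℕ → A, MemL2 x → Γ x = ∑' i, Γ (Pi.single i 1) * x i) ∧
      (∀ (x : ℕ → A) (a : A), MemL2 x →
        star (Γ x) * a = ∑' i, star (x i) * (star (Γ (Pi.single i 1)) * a))) :=
  functional_adjointable_iff_general Γ hadd hAlin hbdd
end
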